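/- arXiv:2410.12370 — 2 statements merged into one kernel-verified Lean document; each statement's English description precedes it below -/
import Mathlib

section
/- Under the hypotheses of the previous statement, if additionally there is an observability constant C_obs such that |v|_X ≤ C_obs(|Lv|_H + δ₀) for all v ∈ A (where X is a normed space into which A embeds and δ₀ ≥ 0 reflects boundary data mismatch), and if |g* − g|_H ≤ δ, then with the choice γ = δ², the minimizer satisfies |u_γ − u*|_X ≤ C_obs ( δ₀ + δ √(1 + |u*|_A²) ) ≤ C_obs (δ₀ + (1 + |u*|_A) δ). -/
/-!
Expanding the Tikhonov functional `J` around its minimizer `u_γ` along `v`, the linear term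
vanishes: the quadratic `t ↦ J (u_γ + t v) - J u_γ` is nonnegative with no constant term, so its
discriminant, four times the square of that coefficient, is `≤ 0`. Hence
`J u = J u_γ + |L(u - u_γ)|² + γ |u - u_γ|²` exactly. Comparing with the exact solution `u*`,
for which `J u* ≤ δ² + γ |u*|²`, gives `|L(u_γ - u*)|² ≤ δ² (1 + |u*|²)` when `γ = δ²`, and the
observability estimate turns this residual bound into the bound in `X`.
-/

open RealInnerProductSpace

section Tikhonov

variable {A H : Type*} [NormedAddCommGroup A] [InnerProductSpace ℝ A]
  [NormedAddCommGroup H] [InnerProductSpace ℝ H]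

noncomputable def tikhonov (L : A →ₗ[ℝ] H) (g : H) (γ : ℝ) (u : A) : ℝ :=
  ‖L u - g‖ ^ 2 + γ * ‖u‖ ^ 2

theorem tikhonov_add_smul (L : A →ₗ[ℝ] H) (g : H) (γ : ℝ) (u v : A) (t : ℝ) :
    tikhonov L g γ (u + t • v) = (‖L v‖ ^ 2 + γ * ‖v‖ ^ 2) * (t * t)
      + 2 * (⟪L u - g, L v⟫ + γ * ⟪u, v⟫) * t + tikhonov L g γ u := by
  have hres : L (u + t • v) - g = (L u - g) + t • L v := by
    rw [map_add, map_smul]; abel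
  simp only [tikhonov, hres, norm_add_sq_real, real_inner_smul_right, norm_smul,
    Real.norm_eq_abs, mul_pow, sq_abs]
  ring

theorem inner_tikhonov_eq_zero_of_isMin (L : A →ₗ[ℝ] H) (g : H) (γ : ℝ) {u₀ : A}
    (hmin : ∀ w, tikhonov L g γ u₀ ≤ tikhonov L g γ w) (v : A) :
    ⟪L u₀ - g, L v⟫ + γ * ⟪u₀, v⟫ = 0 := by
  have hquad : ∀ t : ℝ, 0 ≤ (‖L v‖ ^ 2 + γ * ‖v‖ ^ 2) * (t * t)
      + 2 * (⟪L u₀ - g, L v⟫ + γ * ⟪u₀, v⟫) * t + 0 := fun t => by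
    linarith [hmin (u₀ + t • v), tikhonov_add_smul L g γ u₀ v t]
  have hdiscr := discrim_le_zero hquad
  rw [discrim] at hdiscr
  nlinarith [sq_nonneg (⟪L u₀ - g, L v⟫ + γ * ⟪u₀, v⟫)]

theorem tikhonov_eq_of_isMin (L : A →ₗ[ℝ] H) (g : H) (γ : ℝ) {u₀ : A}
    (hmin : ∀ w, tikhonov L g γ u₀ ≤ tikhonov L g γ w) (u : A) :
    tikhonov L g γ u = tikhonov L g γ u₀ + (‖L (u - u₀)‖ ^ 2 + γ * ‖u - u₀‖ ^ 2) := by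
  have h := tikhonov_add_smul L g γ u₀ (u - u₀) 1
  rw [one_smul, add_sub_cancel, inner_tikhonov_eq_zero_of_isMin L g γ hmin] at h
  linarith

theorem tikhonov_error_le (L : A →ₗ[ℝ] H) (g : H) {γ δ : ℝ} (hγ : 0 ≤ γ) {u₀ u : A}
    (hmin : ∀ w, tikhonov L g γ u₀ ≤ tikhonov L g γ w) (hu : ‖L u - g‖ ≤ δ) :
    ‖L (u₀ - u)‖ ^ 2 + γ * ‖u₀ - u‖ ^ 2 ≤ δ ^ 2 + γ * ‖u‖ ^ 2 := by
  have hJ := tikhonov_eq_of_isMin L g γ hmin u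
  have hJ₀ : 0 ≤ tikhonov L g γ u₀ := by unfold tikhonov; positivity
  have hres : ‖L u - g‖ ^ 2 ≤ δ ^ 2 := pow_le_pow_left₀ (norm_nonneg _) hu 2
  rw [← norm_neg, ← map_neg, neg_sub, ← norm_neg (u₀ - u), neg_sub]
  unfold tikhonov at hJ hJ₀
  linarith

end Tikhonov

theorem sqrt_one_add_sq_le {x : ℝ} (hx : 0 ≤ x) : √(1 + x ^ 2) ≤ 1 + x :=
  (Real.sqrt_le_left (by positivity)).mpr (by nlinarith)

theorem stmt8_general {A H X : Type*} [NormedAddCommGroup A] [InnerProductSpace ℝ A]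
    [NormedAddCommGroup H] [InnerProductSpace ℝ H]
    [NormedAddCommGroup X] [NormedSpace ℝ X]
    (L : A →L[ℝ] H) (ι : A →ₗ[ℝ] X) (Cobs δ₀ δ : ℝ)
    (hCobs : 0 ≤ Cobs)
    (hobs : ∀ v : A, ‖ι v‖ ≤ Cobs * (‖L v‖ + δ₀))
    (g gs : H) (us uγ : A) (hus : L us = gs) (hg : ‖gs - g‖ ≤ δ)
    (hmin : ∀ u : A,
      ‖L uγ - g‖ ^ 2 + δ ^ 2 * ‖uγ‖ ^ 2 ≤ ‖L u - g‖ ^ 2 + δ ^ 2 * ‖u‖ ^ 2) :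
    ‖ι (uγ - us)‖ ≤ Cobs * (δ₀ + δ * Real.sqrt (1 + ‖us‖ ^ 2)) ∧
    Cobs * (δ₀ + δ * Real.sqrt (1 + ‖us‖ ^ 2)) ≤ Cobs * (δ₀ + (1 + ‖us‖) * δ) := by
  have hδ : 0 ≤ δ := (norm_nonneg _).trans hg
  have herr : ‖L (uγ - us)‖ ^ 2 + δ ^ 2 * ‖uγ - us‖ ^ 2 ≤ δ ^ 2 + δ ^ 2 * ‖us‖ ^ 2 :=
    tikhonov_error_le (L : A →ₗ[ℝ] H) g (sq_nonneg δ) hmin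
      (by rwa [ContinuousLinearMap.coe_coe, hus])
  have hresidual : ‖L (uγ - us)‖ ≤ δ * √(1 + ‖us‖ ^ 2) := by
    rw [← Real.sqrt_sq hδ, ← Real.sqrt_mul (sq_nonneg δ),
      Real.le_sqrt (norm_nonneg _) (by positivity)]
    linarith [mul_nonneg (sq_nonneg δ) (sq_nonneg ‖uγ - us‖)]
  constructor
  · calc ‖ι (uγ - us)‖ ≤ Cobs * (‖L (uγ - us)‖ + δ₀) := hobs _
      _ ≤ Cobs * (δ₀ + δ * √(1 + ‖us‖ ^ 2)) := by rw [add_comm]; gcongr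
  · rw [mul_comm (1 + ‖us‖)]
    gcongr
    exact sqrt_one_add_sq_le (norm_nonneg us)

/-- convergence rate of the Tikhonov minimizer under an observability
(conditional stability) estimate, with the choice `γ = δ²`. -/
theorem stmt8 {A H X : Type*} [NormedAddCommGroup A] [InnerProductSpace ℝ A] [CompleteSpace A]
    [NormedAddCommGroup H] [InnerProductSpace ℝ H] [CompleteSpace H]
    [NormedAddCommGroup X] [NormedSpace ℝ X]
    (L : A →L[ℝ] H) (ι : A →ₗ[ℝ] X) (Cobs δ₀ δ : ℝ)
    (hCobs : 0 ≤ Cobs) (hδ₀ : 0 ≤ δ₀) (hδ : 0 < δ) (hδ1 : δ < 1)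
    (hobs : ∀ v : A, ‖ι v‖ ≤ Cobs * (‖L v‖ + δ₀))
    (g gs : H) (us uγ : A) (hus : L us = gs) (hg : ‖gs - g‖ ≤ δ)
    (hmin : ∀ u : A,
      ‖L uγ - g‖ ^ 2 + δ ^ 2 * ‖uγ‖ ^ 2 ≤ ‖L u - g‖ ^ 2 + δ ^ 2 * ‖u‖ ^ 2) :
    ‖ι (uγ - us)‖ ≤ Cobs * (δ₀ + δ * Real.sqrt (1 + ‖us‖ ^ 2)) ∧
    Cobs * (δ₀ + δ * Real.sqrt (1 + ‖us‖ ^ 2)) ≤ Cobs * (δ₀ + (1 + ‖us‖) * δ) :=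
  stmt8_general L ι Cobs δ₀ δ hCobs hobs g gs us uγ hus hg hmin
end

section
/- Let ξ ∈ C¹(ℝⁿ, ℝⁿ) be a vector field, (b^{ij}) symmetric C¹ coefficients, and z ∈ C²((0,T)×ℝⁿ). Then the following pointwise multiplier identity holds: ∑_{i=1}^n ∂_{x_i} [ 2(ξ·∇z) ∑_j b^{ij} z_j + ξ^i ( z_t² − ∑_{j,k} b^{jk} z_j z_k ) ] = 2(ξ·∇z)( ∑_{i,j} (b^{ij} z_i)_j − z_{tt} ) + 2 ∂_t ( z_t ξ·∇z ) + 2 ∑_{i,j,k} b^{ij} z_i z_k ξ^k_j + (div ξ) z_t² − ∑_{i,j} z_j z_i div(b^{ij} ξ). -/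
/-!
Expand the divergence by the product rule. The terms with second derivatives of `z` cancel in
pairs: by the symmetry of `(b^{ij})` and of the Hessian of `z`, `2 ∑ᵢ (ξ·∇zᵢ) (b∇z)ᵢ` is the
derivative of the quadratic form `b∇z·∇z` along `ξ` with `b` frozen, and `2 z_t ξ·∇z_t` is
absorbed into `2 ∂_t (z_t ξ·∇z)` since `∂ᵢ∂_t z = ∂_t∂ᵢ z`. What is left is an identity between
finite sums of the pointwise values of `b, ∂b, ξ, ∂ξ, ∇z, ∇z_t, ∇²z, z_t, z_tt`, which holds in
any commutative ring.
-/

/-- time derivative of a function on `ℝ × ℝⁿ` -/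
noncomputable def pt {n : ℕ} (f : ℝ × (Fin n → ℝ) → ℝ) (p : ℝ × (Fin n → ℝ)) : ℝ :=
  fderiv ℝ f p (1, 0)

/-- `i`-th spatial partial derivative of a function on `ℝ × ℝⁿ` -/
noncomputable def px {n : ℕ} (i : Fin n) (f : ℝ × (Fin n → ℝ) → ℝ)
    (p : ℝ × (Fin n → ℝ)) : ℝ :=
  fderiv ℝ f p (0, Pi.single i 1)

/-- `i`-th partial derivative of a function on `ℝⁿ` -/
noncomputable def pxs {n : ℕ} (i : Fin n) (g : (Fin n → ℝ) → ℝ) (x : Fin n → ℝ) : ℝ :=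
  fderiv ℝ g x (Pi.single i 1)

open Finset

section Calculus

variable {E F : Type*} [NormedAddCommGroup E] [NormedSpace ℝ E] [NormedAddCommGroup F]
  [NormedSpace ℝ F]

lemma fderiv_fun_mul_apply {f g : E → ℝ} {x : E} (hf : DifferentiableAt ℝ f x)
    (hg : DifferentiableAt ℝ g x) (v : E) :
    fderiv ℝ (fun y => f y * g y) x v = fderiv ℝ f x v * g x + f x * fderiv ℝ g x v := by
  rw [fderiv_fun_mul hf hg, add_apply, smul_apply, smul_apply, smul_eq_mul, smul_eq_mul]
  ring

lemma fderiv_comp_snd_apply {g : F → ℝ} {p : E × F} (hg : DifferentiableAt ℝ g p.2)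
    (v : E × F) : fderiv ℝ (fun q : E × F => g q.2) p v = fderiv ℝ g p.2 v.2 :=
  congrArg (· v) (hg.hasFDerivAt.comp p hasFDerivAt_snd).fderiv

lemma fderiv_fderiv_apply_comm {f : E → F} {x : E} (hf : ContDiffAt ℝ 2 f x) (v w : E) :
    fderiv ℝ (fun y => fderiv ℝ f y w) x v = fderiv ℝ (fun y => fderiv ℝ f y v) x w := by
  have hdf : DifferentiableAt ℝ (fderiv ℝ f) x :=
    (hf.fderiv_right (m := 1) le_rfl).differentiableAt one_ne_zero
  rw [fderiv_clm_apply hdf (differentiableAt_const w),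
    fderiv_clm_apply hdf (differentiableAt_const v)]
  simpa using hf.isSymmSndFDerivAt (by simp) v w

end Calculus

section PartialDerivatives

variable {n : ℕ} {z : ℝ × (Fin n → ℝ) → ℝ} {p : ℝ × (Fin n → ℝ)}

lemma px_pt_comm (hz : ContDiffAt ℝ 2 z p) (i : Fin n) : px i (pt z) p = pt (px i z) p :=
  fderiv_fderiv_apply_comm hz _ _

lemma px_px_comm (hz : ContDiffAt ℝ 2 z p) (i j : Fin n) : px i (px j z) p = px j (px i z) p :=
  fderiv_fderiv_apply_comm hz _ _

end PartialDerivatives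

section Algebra

variable {ι R : Type*} [Fintype ι] [CommRing R]

lemma sum_sum_sum_rotate (f : ι → ι → ι → R) :
    ∑ a, ∑ b, ∑ c, f a b c = ∑ a, ∑ b, ∑ c, f c a b := by
  rw [sum_comm]
  exact sum_congr rfl fun _ _ => sum_comm

lemma sum_jacobian_mul_symm {B D : ι → ι → R} {Z : ι → R} (hB : ∀ i j, B i j = B j i) :
    ∑ i, (∑ m, D m i * Z m) * ∑ j, B i j * Z j = ∑ i, ∑ j, ∑ k, B i j * Z i * Z k * D k j := by
  simp only [sum_mul, mul_sum]
  rw [sum_sum_sum_rotate]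
  refine sum_congr rfl fun i _ => sum_comm.trans ?_
  exact sum_congr rfl fun j _ => sum_congr rfl fun k _ => by rw [hB]; ring

lemma two_mul_sum_hessian_mul_symm {B H : ι → ι → R} {X Z : ι → R} (hB : ∀ i j, B i j = B j i)
    (hH : ∀ i j, H i j = H j i) :
    2 * ∑ i, (∑ m, X m * H i m) * ∑ j, B i j * Z j
      = ∑ i, X i * ∑ j, ∑ k, (B j k * H i j * Z k + B j k * Z j * H i k) := by
  have hswap : ∀ i, ∑ j, ∑ k, B j k * Z j * H i k = ∑ j, ∑ k, B j k * H i j * Z k := fun i => by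
    rw [sum_comm]
    exact sum_congr rfl fun j _ => sum_congr rfl fun k _ => by rw [hB]; ring
  have hfirst : ∑ i, (∑ m, X m * H i m) * ∑ j, B i j * Z j
      = ∑ i, X i * ∑ j, ∑ k, B j k * H i j * Z k := by
    simp only [sum_mul, mul_sum]
    rw [← sum_sum_sum_rotate]
    exact sum_congr rfl fun i _ => sum_congr rfl fun j _ => sum_congr rfl fun k _ => by
      rw [hH]; ring
  simp only [sum_add_distrib, mul_add, hswap, hfirst]
  ring

lemma sum_quadratic_form_divergence {B D : ι → ι → R} {Bd : ι → ι → ι → R} {X Z : ι → R} :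
    ∑ i, X i * ∑ j, ∑ k, Bd j k i * Z j * Z k + (∑ j, ∑ k, B j k * Z j * Z k) * ∑ i, D i i
      = ∑ i, ∑ j, Z j * Z i * ∑ k, (Bd i j k * X k + B i j * D k k) := by
  have hB_part : (∑ j, ∑ k, B j k * Z j * Z k) * ∑ i, D i i
      = ∑ i, ∑ j, Z j * Z i * ∑ k, B i j * D k k := by
    simp only [sum_mul, mul_sum]
    rw [sum_sum_sum_rotate]
    exact sum_congr rfl fun i _ => sum_congr rfl fun j _ => sum_congr rfl fun k _ => by ring
  have hX_part : ∑ i, X i * ∑ j, ∑ k, Bd j k i * Z j * Z k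
      = ∑ i, ∑ j, Z j * Z i * ∑ k, Bd i j k * X k := by
    simp only [mul_sum]
    rw [sum_sum_sum_rotate]
    exact sum_congr rfl fun i _ => sum_congr rfl fun j _ => sum_congr rfl fun k _ => by ring
  simp only [mul_add, sum_add_distrib, hB_part, hX_part]

/-- In the application `B i j = b^{ij}`, `Bd i j k = ∂ₖ b^{ij}`, `X = ξ`, `D k j = ∂ⱼ ξ^k`,
`Z = ∇z`, `Zt = ∇z_t`, `H = ∇²z`, `U = z_t`, `Utt = z_tt`. -/
lemma multiplier_identity_algebraic (B : ι → ι → R) (Bd : ι → ι → ι → R) (X : ι → R)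
    (D : ι → ι → R) (Z Zt : ι → R) (H : ι → ι → R) (U Utt : R)
    (hB : ∀ i j, B i j = B j i) (hBd : ∀ i j k, Bd i j k = Bd j i k) (hH : ∀ i j, H i j = H j i) :
    ∑ i, (2 * (∑ m, (D m i * Z m + X m * H i m)) * (∑ j, B i j * Z j)
      + 2 * (∑ m, X m * Z m) * (∑ j, (Bd i j i * Z j + B i j * H i j))
      + D i i * (U ^ 2 - ∑ j, ∑ k, B j k * Z j * Z k)
      + X i * (2 * U * Zt i - ∑ j, ∑ k, (Bd j k i * Z j * Z k
          + B j k * H i j * Z k + B j k * Z j * H i k)))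
    = 2 * (∑ m, X m * Z m) * ((∑ i, ∑ j, (Bd i j j * Z i + B i j * H j i)) - Utt)
      + 2 * (Utt * (∑ m, X m * Z m) + U * ∑ m, X m * Zt m)
      + 2 * ∑ i, ∑ j, ∑ k, B i j * Z i * Z k * D k j
      + (∑ k, D k k) * U ^ 2
      - ∑ i, ∑ j, Z j * Z i * (∑ k, (Bd i j k * X k + B i j * D k k)) := by
  have hdivB : ∑ i, ∑ j, (Bd i j i * Z j + B i j * H i j)
      = ∑ i, ∑ j, (Bd i j j * Z i + B i j * H j i) := by
    simp only [sum_add_distrib, hH]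
    rw [sum_comm (f := fun i j => Bd i j i * Z j)]
    simp only [hBd]
  calc _ = ∑ i, (2 * ((∑ m, D m i * Z m) * ∑ j, B i j * Z j)
          + 2 * ((∑ m, X m * H i m) * ∑ j, B i j * Z j)
          + 2 * (∑ m, X m * Z m) * ∑ j, (Bd i j i * Z j + B i j * H i j)
          + U ^ 2 * D i i - (∑ j, ∑ k, B j k * Z j * Z k) * D i i
          + 2 * U * (X i * Zt i)
          - X i * ∑ j, ∑ k, Bd j k i * Z j * Z k
          - X i * ∑ j, ∑ k, (B j k * H i j * Z k + B j k * Z j * H i k)) :=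
        sum_congr rfl fun i _ => by simp only [sum_add_distrib]; ring
    _ = 2 * ∑ i, (∑ m, D m i * Z m) * ∑ j, B i j * Z j
        + 2 * ∑ i, (∑ m, X m * H i m) * ∑ j, B i j * Z j
        + 2 * (∑ m, X m * Z m) * ∑ i, ∑ j, (Bd i j i * Z j + B i j * H i j)
        + U ^ 2 * ∑ i, D i i - (∑ j, ∑ k, B j k * Z j * Z k) * ∑ i, D i i
        + 2 * U * ∑ i, X i * Zt i
        - ∑ i, X i * ∑ j, ∑ k, Bd j k i * Z j * Z k
        - ∑ i, X i * ∑ j, ∑ k, (B j k * H i j * Z k + B j k * Z j * H i k) := by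
      simp only [sum_add_distrib, sum_sub_distrib, ← mul_sum]
    _ = _ := by
      rw [two_mul_sum_hessian_mul_symm hB hH, sum_jacobian_mul_symm hB, hdivB,
        ← sum_quadratic_form_divergence]
      ring

end Algebra

section Expansion

variable {n : ℕ} {b : Fin n → Fin n → (Fin n → ℝ) → ℝ} {X : Fin n → (Fin n → ℝ) → ℝ}
  {z : ℝ × (Fin n → ℝ) → ℝ} (p : ℝ × (Fin n → ℝ))

lemma px_multiplier_flux (hb : ∀ i j, Differentiable ℝ (b i j)) (hX : ∀ k, Differentiable ℝ (X k))
    (hz : ∀ v, Differentiable ℝ fun q => fderiv ℝ z q v) (i : Fin n) :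
    px i (fun q => 2 * (∑ m, X m q.2 * px m z q) * (∑ j, b i j q.2 * px j z q)
        + X i q.2 * ((pt z q) ^ 2 - ∑ j, ∑ k, b j k q.2 * px j z q * px k z q)) p
      = 2 * (∑ m, (pxs i (X m) p.2 * px m z p + X m p.2 * px i (px m z) p))
          * (∑ j, b i j p.2 * px j z p)
        + 2 * (∑ m, X m p.2 * px m z p)
          * (∑ j, (pxs i (b i j) p.2 * px j z p + b i j p.2 * px i (px j z) p))
        + pxs i (X i) p.2 * ((pt z p) ^ 2 - ∑ j, ∑ k, b j k p.2 * px j z p * px k z p)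
        + X i p.2 * (2 * pt z p * px i (pt z) p
            - ∑ j, ∑ k, (pxs i (b j k) p.2 * px j z p * px k z p
                + b j k p.2 * px i (px j z) p * px k z p
                + b j k p.2 * px j z p * px i (px k z) p)) := by
  unfold px pt pxs
  simp (disch := fun_prop) only [fderiv_fun_mul_apply, fderiv_fun_add, fderiv_fun_sub,
    fderiv_fun_sum, fderiv_fun_pow, fderiv_fun_const, fderiv_comp_snd_apply, add_apply, sub_apply,
    _root_.sum_apply, smul_apply, smul_eq_mul, Pi.zero_apply, zero_apply, add_mul]
  ring

lemma px_coeff_mul_px (hb : ∀ i j, Differentiable ℝ (b i j))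
    (hz : ∀ v, Differentiable ℝ fun q => fderiv ℝ z q v) (i j k : Fin n) :
    px k (fun q => b i j q.2 * px i z q) p
      = pxs k (b i j) p.2 * px i z p + b i j p.2 * px k (px i z) p := by
  unfold px pxs
  simp (disch := fun_prop) only [fderiv_fun_mul_apply, fderiv_comp_snd_apply]

lemma pt_pt_mul_transport (hX : ∀ k, Differentiable ℝ (X k))
    (hz : ∀ v, Differentiable ℝ fun q => fderiv ℝ z q v) :
    pt (fun q => pt z q * ∑ m, X m q.2 * px m z q) p
      = pt (pt z) p * (∑ m, X m p.2 * px m z p) + pt z p * ∑ m, X m p.2 * pt (px m z) p := by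
  unfold px pt
  simp (disch := fun_prop) only [fderiv_fun_mul_apply, fderiv_fun_sum, _root_.sum_apply,
    fderiv_comp_snd_apply, map_zero, zero_mul, zero_add]

lemma pxs_coeff_mul (hb : ∀ i j, Differentiable ℝ (b i j)) (hX : ∀ k, Differentiable ℝ (X k))
    (i j k : Fin n) :
    pxs k (fun y => b i j y * X k y) p.2
      = pxs k (b i j) p.2 * X k p.2 + b i j p.2 * pxs k (X k) p.2 :=
  fderiv_fun_mul_apply (hb i j p.2) (hX k p.2) _

end Expansion

/-- the pointwise multiplier identity for the hidden regularity estimate. -/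
theorem stmt13 {n : ℕ} (b : Fin n → Fin n → (Fin n → ℝ) → ℝ)
    (ξ : (Fin n → ℝ) → Fin n → ℝ) (z : ℝ × (Fin n → ℝ) → ℝ)
    (hb : ∀ i j, ContDiff ℝ 1 (b i j)) (hbsymm : ∀ i j x, b i j x = b j i x)
    (hξ : ContDiff ℝ 1 ξ) (hz : ContDiff ℝ 2 z)
    (p : ℝ × (Fin n → ℝ)) :
    ∑ i, px i (fun q =>
        2 * (∑ m, ξ q.2 m * px m z q) * (∑ j, b i j q.2 * px j z q)
          + ξ q.2 i * ((pt z q) ^ 2 - ∑ j, ∑ k, b j k q.2 * px j z q * px k z q)) p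
      = 2 * (∑ m, ξ p.2 m * px m z p)
            * ((∑ i, ∑ j, px j (fun q => b i j q.2 * px i z q) p) - pt (pt z) p)
        + 2 * pt (fun q => pt z q * ∑ m, ξ q.2 m * px m z q) p
        + 2 * ∑ i, ∑ j, ∑ k, b i j p.2 * px i z p * px k z p * pxs j (fun y => ξ y k) p.2
        + (∑ k, pxs k (fun y => ξ y k) p.2) * (pt z p) ^ 2
        - ∑ i, ∑ j, px j z p * px i z p * (∑ k, pxs k (fun y => b i j y * ξ y k) p.2) := by
  have hb' : ∀ i j, Differentiable ℝ (b i j) := fun i j => (hb i j).differentiable one_ne_zero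
  have hξ' : ∀ k, Differentiable ℝ fun y => ξ y k := fun k =>
    (contDiff_pi.1 hξ k).differentiable one_ne_zero
  have hz' : ∀ v, Differentiable ℝ fun q => fderiv ℝ z q v := fun v =>
    ((hz.fderiv_right (m := 1) le_rfl).clm_apply contDiff_const).differentiable one_ne_zero
  have hb_deriv_symm : ∀ i j k, pxs k (b i j) p.2 = pxs k (b j i) p.2 := fun i j k => by
    rw [funext (hbsymm i j)]
  simp only [px_multiplier_flux p hb' hξ' hz', px_coeff_mul_px p hb' hz',
    pt_pt_mul_transport p hξ' hz', pxs_coeff_mul p hb' hξ', px_pt_comm hz.contDiffAt]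
  exact multiplier_identity_algebraic (fun i j => b i j p.2) (fun i j k => pxs k (b i j) p.2)
    (fun m => ξ p.2 m) (fun k j => pxs j (fun y => ξ y k) p.2) (fun i => px i z p)
    (fun i => pt (px i z) p) (fun i j => px i (px j z) p) (pt z p) (pt (pt z) p)
    (fun i j => hbsymm i j p.2) hb_deriv_symm (fun i j => px_px_comm hz.contDiffAt i j)
end
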